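/- arXiv:0902.0383 — 2 statements merged into one kernel-verified Lean document; each statement's English description precedes it below -/
import Mathlib

section
/- Let T₁, …, T_{n−1} be invertible elements of an associative unital algebra over ℂ satisfying Tᵢ² = −Id, TᵢTⱼ = TⱼTᵢ for |i−j| > 1, and TᵢT_{i+1} = −T_{i+1}Tᵢ. Then the elements Řᵢ = (Id + Tᵢ)/√2 satisfy the braid relations ŘᵢŘ_{i+1}Řᵢ = Ř_{i+1}ŘᵢŘ_{i+1} and ŘᵢŘⱼ = ŘⱼŘᵢ for |i−j| > 1, and each Řᵢ is invertible. -/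
/-! If `x² = -1` then `(1 + x)(1 - x) = (1 - x)(1 + x) = 2`, so `1 + x` is invertible as soon as `2`
is. If moreover `xy = -yx`, then `xyx = y` and expanding gives `(1 + x)(1 + y)(1 + x) = 2(x + y)`,
which is symmetric in `x` and `y`: this is the braid relation. -/

section SqEqNegOne

variable {A : Type*} [Ring A] {x y : A}

theorem one_add_mul_one_sub_of_sq_eq_neg_one (hx : x ^ 2 = -1) : (1 + x) * (1 - x) = 2 := by
  rw [sq] at hx
  noncomm_ring
  rw [hx]; norm_num

theorem one_sub_mul_one_add_of_sq_eq_neg_one (hx : x ^ 2 = -1) : (1 - x) * (1 + x) = 2 := by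
  rw [sq] at hx
  noncomm_ring
  rw [hx]; norm_num

theorem isUnit_one_add_of_sq_eq_neg_one (h2 : IsUnit (2 : A)) (hx : x ^ 2 = -1) :
    IsUnit (1 + x) := by
  obtain ⟨u, hu⟩ := h2
  refine isUnit_iff_exists_and_exists.2 ⟨⟨(1 - x) * ↑u⁻¹, ?_⟩, ⟨↑u⁻¹ * (1 - x), ?_⟩⟩
  · rw [← mul_assoc, one_add_mul_one_sub_of_sq_eq_neg_one hx, ← hu, Units.mul_inv]
  · rw [mul_assoc, one_sub_mul_one_add_of_sq_eq_neg_one hx, ← hu, Units.inv_mul]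

theorem one_add_mul_one_add_mul_one_add_eq_two_mul_add (hx : x ^ 2 = -1)
    (hxy : x * y = -(y * x)) : (1 + x) * (1 + y) * (1 + x) = 2 * (x + y) := by
  rw [sq] at hx
  have hxyx : x * y * x = y := by
    rw [hxy, neg_mul, mul_assoc, hx, mul_neg_one, neg_neg]
  calc (1 + x) * (1 + y) * (1 + x)
      = 1 + x + y + x * y + x + x * x + y * x + x * y * x := by noncomm_ring
    _ = 2 * (x + y) := by rw [hxyx, hx, hxy]; noncomm_ring

theorem one_add_braid_of_anticommute (hx : x ^ 2 = -1) (hy : y ^ 2 = -1)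
    (hxy : x * y = -(y * x)) :
    (1 + x) * (1 + y) * (1 + x) = (1 + y) * (1 + x) * (1 + y) := by
  have hyx : y * x = -(x * y) := by rw [hxy, neg_neg]
  rw [one_add_mul_one_add_mul_one_add_eq_two_mul_add hx hxy,
    one_add_mul_one_add_mul_one_add_eq_two_mul_add hy hyx, add_comm]

end SqEqNegOne

theorem smul_braid {R A : Type*} [Monoid R] [Mul A] [MulAction R A] [IsScalarTower R A A]
    [SMulCommClass R A A] (c : R) {a b : A} (h : a * b * a = b * a * b) :
    c • a * c • b * c • a = c • b * c • a * c • b := by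
  simp only [smul_mul_smul_comm, h]

theorem braid_relations_from_extraspecial_general (A : Type*) [Ring A] [Algebra ℂ A]
    (m : ℕ) (T : ℕ → A)
    (hsq : ∀ i, i < m → T i ^ 2 = -1)
    (hcom : ∀ i j, i + 2 ≤ j → j < m → T i * T j = T j * T i)
    (hadj : ∀ i, i + 1 < m → T i * T (i + 1) = -(T (i + 1) * T i))
    (R : ℕ → A)
    (hR : ∀ i, R i = ((Real.sqrt 2 : ℂ))⁻¹ • (1 + T i)) :
    (∀ i, i + 1 < m → R i * R (i + 1) * R i = R (i + 1) * R i * R (i + 1)) ∧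
    (∀ i j, i + 2 ≤ j → j < m → R i * R j = R j * R i) ∧
    (∀ i, i < m → IsUnit (R i)) := by
  have hc : ((Real.sqrt 2 : ℂ))⁻¹ ≠ 0 := by simp
  have h2 : IsUnit (2 : A) := by
    rw [← map_ofNat (algebraMap ℂ A) 2]
    exact (IsUnit.mk0 (2 : ℂ) two_ne_zero).map _
  refine ⟨fun i hi => ?_, fun i j hij hj => ?_, fun i hi => ?_⟩
  · simp only [hR]
    exact smul_braid _
      (one_add_braid_of_anticommute (hsq i (by omega)) (hsq (i + 1) hi) (hadj i hi))
  · simp only [hR]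
    exact ((Commute.one_right _).add_right ((Commute.one_left _).add_left (hcom i j hij hj))
      |>.smul_left _ |>.smul_right _).eq
  · rw [hR]
    simpa using (isUnit_one_add_of_sq_eq_neg_one h2 (hsq i hi)).smul (Units.mk0 _ hc)

/-- Let `T 0, …, T (m-1)` be invertible elements of an associative unital
`ℂ`-algebra satisfying `(T i)² = -1`, commuting at distance `≥ 2` and
anticommuting at adjacent indices.  Then the elements
`Ř i = (1 + T i)/√2` satisfy the braid relations, commute at distance `≥ 2`,
and are invertible. -/
theorem braid_relations_from_extraspecial (A : Type*) [Ring A] [Algebra ℂ A]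
    (m : ℕ) (T : ℕ → A)
    (hunit : ∀ i, i < m → IsUnit (T i))
    (hsq : ∀ i, i < m → T i ^ 2 = -1)
    (hcom : ∀ i j, i + 2 ≤ j → j < m → T i * T j = T j * T i)
    (hadj : ∀ i, i + 1 < m → T i * T (i + 1) = -(T (i + 1) * T i))
    (R : ℕ → A)
    (hR : ∀ i, R i = ((Real.sqrt 2 : ℂ))⁻¹ • (1 + T i)) :
    (∀ i, i + 1 < m → R i * R (i + 1) * R i = R (i + 1) * R i * R (i + 1)) ∧
    (∀ i j, i + 2 ≤ j → j < m → R i * R j = R j * R i) ∧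
    (∀ i, i < m → IsUnit (R i)) :=
  braid_relations_from_extraspecial_general A m T hsq hcom hadj R hR
end

section
/- Let Q₈ be the quaternion group and D₈ the dihedral group of order 8, each with center of order 2 generated by a central involution. Then the central products Q₈ ∘ Q₈ and D₈ ∘ D₈ (quotients of Q₈ × Q₈ resp. D₈ × D₈ by the antidiagonal copy of the centers) are isomorphic groups of order 32. -/
/-!
Write `ρ : Q₈ → D₈` for the bijection `a i ↦ r i`, `xa i ↦ sr i`, and `τ q` for `r 1` or `1`
according as `q` lies outside `⟨a 1⟩` or not. Then `q ↦ [ρ q, τ q]` and `q ↦ [τ q, ρ q]` are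
commuting homomorphisms `Q₈ → D₈ ∘ D₈`, finitely checked. Together they give a surjection
`Q₈ × Q₈ → D₈ ∘ D₈`, and since `|Q₈ × Q₈| = 64 = 2 · 32`, its kernel is the order-2 subgroup
generated by `(a 2, a 2)`.
-/

open Subgroup QuaternionGroup DihedralGroup

section CentralInvolution

variable {G : Type*} [Group G]

lemma Subgroup.normal_zpowers_of_mem_center {z : G} (hz : z ∈ center G) : (zpowers z).Normal where
  conj_mem n hn g := by
    rwa [mem_center_iff.mp (zpowers_le.mpr hz hn) g, mul_inv_cancel_right]

lemma mem_zpowers_iff_of_orderOf_eq_two [Finite G] [DecidableEq G] {z x : G}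
    (hz : orderOf z = 2) : x ∈ zpowers z ↔ x = 1 ∨ x = z := by
  rw [mem_zpowers_iff_mem_range_orderOf, hz]
  simp [Finset.range_add_one, eq_comm, or_comm]

lemma card_quotient_zpowers_mul_two [Finite G] {z : G} (hz : orderOf z = 2) :
    Nat.card (G ⧸ zpowers z) * 2 = Nat.card G := by
  rw [← (zpowers z).card_mul_index, Nat.card_zpowers, hz, mul_comm]
  rfl

lemma MonoidHom.ker_eq_zpowers_of_card_eq_two_mul {H : Type*} [Group H] [Finite G]
    {f : G →* H} (hf : Function.Surjective f) {z : G} (hz : orderOf z = 2) (hfz : f z = 1)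
    (hcard : Nat.card G = 2 * Nat.card H) : f.ker = zpowers z := by
  have hker : Nat.card f.ker = 2 := by
    have hH : 0 < Nat.card H := Nat.card_pos_iff.mpr ⟨⟨1⟩, Finite.of_surjective f hf⟩
    have h := f.ker.card_mul_index
    rw [index_ker, MonoidHom.range_eq_top.mpr hf, card_top, hcard] at h
    exact Nat.eq_of_mul_eq_mul_right hH h
  refine ((zpowers z).eq_of_le_of_card_ge (zpowers_le.mpr hfz) ?_).symm
  rw [hker, Nat.card_zpowers, hz]

end CentralInvolution

abbrev Q8 := QuaternionGroup 2

abbrev D8 := DihedralGroup 4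

lemma orderOf_a_two_a_two : orderOf ((a 2, a 2) : Q8 × Q8) = 2 :=
  orderOf_eq_prime (by decide) (by decide)

lemma orderOf_r_two_r_two : orderOf ((r 2, r 2) : D8 × D8) = 2 :=
  orderOf_eq_prime (by decide) (by decide)

instance : (zpowers ((a 2, a 2) : Q8 × Q8)).Normal :=
  normal_zpowers_of_mem_center (by rw [mem_center_iff]; decide)

instance : (zpowers ((r 2, r 2) : D8 × D8)).Normal :=
  normal_zpowers_of_mem_center (by rw [mem_center_iff]; decide)

-- Mathlib's `decidableMemZPowers` is classical; this instance lets `decide` compute in `D8∘D8`.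
instance : DecidablePred (· ∈ zpowers ((r 2, r 2) : D8 × D8)) := fun _ =>
  decidable_of_iff _ (mem_zpowers_iff_of_orderOf_eq_two orderOf_r_two_r_two).symm

notation "D8∘D8" => (D8 × D8) ⧸ zpowers ((r 2, r 2) : D8 × D8)

def quatToDihedral : Q8 → D8
  | a i => r i
  | xa i => sr i

def quatTwist : Q8 → D8
  | a _ => 1
  | xa _ => r 1

def quatToCentralProductLeft : Q8 →* D8∘D8 :=
  MonoidHom.mk' (fun q => ((quatToDihedral q, quatTwist q) : D8 × D8))
    fun p q => QuotientGroup.eq.mpr (by revert p q; decide)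

def quatToCentralProductRight : Q8 →* D8∘D8 :=
  MonoidHom.mk' (fun q => ((quatTwist q, quatToDihedral q) : D8 × D8))
    fun p q => QuotientGroup.eq.mpr (by revert p q; decide)

def quatProdToCentralProduct : Q8 × Q8 →* D8∘D8 :=
  quatToCentralProductLeft.noncommCoprod quatToCentralProductRight
    fun p q => QuotientGroup.eq.mpr (by revert p q; decide)

lemma quatProdToCentralProduct_apply (p : Q8 × Q8) :
    quatProdToCentralProduct p =
      ((quatToDihedral p.1 * quatTwist p.2, quatTwist p.1 * quatToDihedral p.2) : D8 × D8) :=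
  rfl

lemma quatProdToCentralProduct_surjective : Function.Surjective quatProdToCentralProduct := by
  intro y
  obtain ⟨⟨d₁, d₂⟩, rfl⟩ := QuotientGroup.mk_surjective y
  rcases d₁ with i | i <;> rcases d₂ with j | j
  · exact ⟨(a i, a j), by simp [quatProdToCentralProduct_apply, quatToDihedral, quatTwist]⟩
  · exact ⟨(a (i - 1), xa j), by simp [quatProdToCentralProduct_apply, quatToDihedral, quatTwist]⟩
  · exact ⟨(xa i, a (j - 1)), by simp [quatProdToCentralProduct_apply, quatToDihedral, quatTwist]⟩
  · exact ⟨(xa (i - 1), xa (j + 1)),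
      by simp [quatProdToCentralProduct_apply, quatToDihedral, quatTwist]⟩

lemma quatProdToCentralProduct_a_two_a_two : quatProdToCentralProduct (a 2, a 2) = 1 :=
  (QuotientGroup.eq_one_iff _).mpr (mem_zpowers _)

lemma card_Q8_prod : Nat.card (Q8 × Q8) = 64 := by
  rw [Nat.card_prod, Nat.card_eq_fintype_card, QuaternionGroup.card]

lemma card_D8_prod : Nat.card (D8 × D8) = 64 := by
  rw [Nat.card_prod, DihedralGroup.nat_card]

lemma card_D8_centralProduct : Nat.card (D8∘D8) = 32 := by
  have := card_quotient_zpowers_mul_two orderOf_r_two_r_two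
  rw [card_D8_prod] at this
  omega

lemma ker_quatProdToCentralProduct : quatProdToCentralProduct.ker = zpowers (a 2, a 2) :=
  MonoidHom.ker_eq_zpowers_of_card_eq_two_mul quatProdToCentralProduct_surjective
    orderOf_a_two_a_two quatProdToCentralProduct_a_two_a_two
    (by rw [card_Q8_prod, card_D8_centralProduct])

noncomputable def quatCentralProductEquiv : (Q8 × Q8) ⧸ zpowers ((a 2, a 2) : Q8 × Q8) ≃* D8∘D8 :=
  (QuotientGroup.quotientMulEquivOfEq ker_quatProdToCentralProduct.symm).trans
    (QuotientGroup.quotientKerEquivOfSurjective _ quatProdToCentralProduct_surjective)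

/-- The central products `Q₈ ∘ Q₈` and `D₈ ∘ D₈` — quotients of `Q₈ × Q₈`
resp. `D₈ × D₈` by the antidiagonal copy of the centers, generated by the pair
of central involutions — are isomorphic groups of order 32. -/
theorem central_products_QQ_DD_iso
    (NQ : Subgroup (QuaternionGroup 2 × QuaternionGroup 2))
    (hNQ : NQ = Subgroup.closure {(QuaternionGroup.a 2, QuaternionGroup.a 2)})
    [NQ.Normal]
    (ND : Subgroup (DihedralGroup 4 × DihedralGroup 4))
    (hND : ND = Subgroup.closure {(DihedralGroup.r 2, DihedralGroup.r 2)})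
    [ND.Normal] :
    Nonempty (((QuaternionGroup 2 × QuaternionGroup 2) ⧸ NQ) ≃*
      ((DihedralGroup 4 × DihedralGroup 4) ⧸ ND)) ∧
    Nat.card ((QuaternionGroup 2 × QuaternionGroup 2) ⧸ NQ) = 32 ∧
    Nat.card ((DihedralGroup 4 × DihedralGroup 4) ⧸ ND) = 32 := by
  obtain rfl : NQ = zpowers (a 2, a 2) := hNQ.trans (zpowers_eq_closure _).symm
  obtain rfl : ND = zpowers (r 2, r 2) := hND.trans (zpowers_eq_closure _).symm
  exact ⟨⟨quatCentralProductEquiv⟩,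
    (Nat.card_congr quatCentralProductEquiv.toEquiv).trans card_D8_centralProduct,
    card_D8_centralProduct⟩
end
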